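/- Suppose Γ is residually finite, 1 → Z → Γ̃ → Γ → 1 is an extension with Γ̃ finitely generated, and there is a nilpotent quotient N of Γ̃ such that Z injects into N. Then Γ̃ is residually finite. -/

import Mathlib

/-!
If `π g ≠ 1`, a finite quotient of `Γ` separates `g`; otherwise `ρ g ≠ 1`, and it suffices that the
finitely generated nilpotent group `N` is residually finite.

Given `g ≠ 1` in a finitely generated nilpotent group `G`, take a normal subgroup `M` maximal among
those avoiding `g`. In `Q = G ⧸ M` every nontrivial normal subgroup contains the image of `g`, in
particular every `⟨x ^ n⟩ ≠ 1` with `x` central; this forces the centre of `Q` to be torsion.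
Subgroups of finitely generated nilpotent groups are finitely generated (induct along the lower
central series: its last nontrivial term is central and generated by the commutators of finitely
many elements with the generators), so the centre of `Q` is finite, and a finitely generated
nilpotent group with finite centre is finite.
-/

def ResiduallyFinite (G : Type*) [Group G] : Prop :=
  ∀ g : G, g ≠ 1 → ∃ (F : Type) (_ : Group F) (_ : Finite F) (ρ : G →* F), ρ g ≠ 1

open Subgroup
open scoped IsMulCommutative commutatorElement

section Commutator

variable {G : Type*} [Group G]

theorem commutatorElement_mul_left_of_mem_center {x y z : G} (h : ⁅y, z⁆ ∈ center G) :
    ⁅x * y, z⁆ = ⁅x, z⁆ * ⁅y, z⁆ := by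
  rw [commutatorElement_mul_left_eq_conj_mul, mem_center_iff.mp h x, mul_inv_cancel_right,
    mem_center_iff.mp h]

theorem commutatorElement_mul_right_of_mem_center {x y z : G} (h : ⁅x, z⁆ ∈ center G) :
    ⁅x, y * z⁆ = ⁅x, y⁆ * ⁅x, z⁆ := by
  rw [commutatorElement_mul_right_eq_mul_conj, mul_assoc _ y, mem_center_iff.mp h y,
    mul_assoc, mul_inv_cancel_right]

theorem commutatorElement_inv_left_of_mem_center {x y : G} (h : ⁅x, y⁆ ∈ center G) :
    ⁅x⁻¹, y⁆ = ⁅x, y⁆⁻¹ := by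
  rw [commutatorElement_inv_left, ← commutatorElement_inv, mul_assoc,
    ← mem_center_iff.mp (inv_mem h), inv_mul_cancel_left]

theorem commutatorElement_inv_right_of_mem_center {x y : G} (h : ⁅x, y⁆ ∈ center G) :
    ⁅x, y⁻¹⁆ = ⁅x, y⁆⁻¹ := by
  rw [commutatorElement_inv_right, ← commutatorElement_inv, mul_assoc,
    ← mem_center_iff.mp (inv_mem h), inv_mul_cancel_left]

theorem commute_inv_mul_of_commutatorElement_eq {a b s : G} (h : ⁅a, s⁆ = ⁅b, s⁆) :
    Commute (b⁻¹ * a) s := by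
  rw [commutatorElement_def, commutatorElement_def, mul_left_inj] at h
  have := congrArg (fun t => b⁻¹ * t * a) h
  simpa [mul_assoc, Commute, SemiconjBy] using this

end Commutator

namespace Subgroup

variable {G G' : Type*} [Group G] [Group G']

theorem fg_of_isMulCommutative [IsMulCommutative G] [Group.FG G] (H : Subgroup G) : H.FG := by
  have : Module.Finite ℤ (Additive G) :=
    Module.Finite.iff_addGroup_fg.mpr (GroupFG.iff_add_fg.mp ‹_›)
  rw [fg_iff_add_fg, ← AddSubgroup.toIntSubmodule_toAddSubgroup H.toAddSubgroup,
    ← Submodule.fg_iff_addSubgroup_fg]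
  exact IsNoetherian.noetherian _

theorem FG.of_le_of_le_center {H K : Subgroup G} (hK : K.FG) (hKc : K ≤ center G)
    (hHK : H ≤ K) : H.FG := by
  have : IsMulCommutative K :=
    ⟨⟨fun a b => Subtype.ext (mem_center_iff.mp (hKc b.2) a)⟩⟩
  have : Group.FG K := (Group.fg_iff_subgroup_fg K).mpr hK
  have : Group.FG (H.subgroupOf K) :=
    (Group.fg_iff_subgroup_fg _).mpr (fg_of_isMulCommutative _)
  exact (Group.fg_iff_subgroup_fg H).mp <|
    Group.fg_of_surjective (f := (subgroupOfEquivOfLe hHK).toMonoidHom)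
      (subgroupOfEquivOfLe hHK).surjective

theorem exists_finite_closure_sup_inf_ker_eq (f : G →* G') {H : Subgroup G}
    (hH : (H.map f).FG) : ∃ A : Set G, A.Finite ∧ closure A ⊔ H ⊓ f.ker = H := by
  obtain ⟨B, hBH, hB, hBclosure⟩ : ∃ B ⊆ f '' H, B.Finite ∧ closure B = H.map f := by
    obtain ⟨B, hBclosure, hB⟩ := (fg_iff _).mp hH
    exact ⟨B, by rw [← coe_map, ← hBclosure]; exact subset_closure, hB, hBclosure⟩
  obtain ⟨A, hAH, hA, hAclosure⟩ :=
    Set.exists_subset_image_finite_and (p := fun B => closure B = H.map f) |>.mp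
      ⟨B, hBH, hB, hBclosure⟩
  have hAle : closure A ≤ H := (closure_le H).mpr hAH
  refine ⟨A, hA, le_antisymm (sup_le hAle inf_le_left) fun h hh => ?_⟩
  obtain ⟨a, ha, hfa⟩ : f h ∈ (closure A).map f := by
    rw [MonoidHom.map_closure, hAclosure]; exact mem_map_of_mem f hh
  have hker : a⁻¹ * h ∈ H ⊓ f.ker :=
    ⟨H.mul_mem (H.inv_mem (hAle ha)) hh, by simp [hfa]⟩
  simpa using mul_mem_sup ha hker

theorem FG.of_map_of_inf_ker (f : G →* G') {H : Subgroup G} (hmap : (H.map f).FG)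
    (hker : (H ⊓ f.ker).FG) : H.FG := by
  obtain ⟨A, hA, hAH⟩ := exists_finite_closure_sup_inf_ker_eq f hmap
  rw [← hAH]
  exact ((fg_iff _).mpr ⟨A, rfl, hA⟩).sup hker

theorem commutator_closure_le_closure_image2 {s t : Set G}
    (hs : ∀ x ∈ closure s, ∀ y, ⁅x, y⁆ ∈ center G) :
    ⁅closure s, closure t⁆ ≤ closure (Set.image2 (⁅·, ·⁆) s t) := by
  set C := closure (Set.image2 (⁅·, ·⁆) s t)
  have hright : ∀ x ∈ s, ∀ y ∈ closure t, ⁅x, y⁆ ∈ C := by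
    intro x hx y hy
    induction hy using closure_induction with
    | mem y hy => exact subset_closure (Set.mem_image2_of_mem hx hy)
    | one => simp
    | mul y z _ _ hy hz =>
      rw [commutatorElement_mul_right_of_mem_center (hs x (subset_closure hx) z)]
      exact C.mul_mem hy hz
    | inv y _ hy =>
      rw [commutatorElement_inv_right_of_mem_center (hs x (subset_closure hx) y)]
      exact C.inv_mem hy
  rw [commutator_le]
  intro x hx y hy
  induction hx using closure_induction with
  | mem x hx => exact hright x hx y hy
  | one => simp
  | mul x z _ hz hx' hz' =>
    rw [commutatorElement_mul_left_of_mem_center (hs z hz y)]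
    exact C.mul_mem hx' hz'
  | inv x hx hx' =>
    rw [commutatorElement_inv_left_of_mem_center (hs x hx y)]
    exact C.inv_mem hx'

theorem fg_commutator_top_of_closure_sup_eq [Group.FG G] {H : Subgroup G}
    (hc : ⁅H, ⊤⁆ ≤ center G) {A : Set G} (hA : A.Finite) (hAH : closure A ⊔ ⁅H, ⊤⁆ = H) :
    (⁅H, ⊤⁆ : Subgroup G).FG := by
  obtain ⟨S, hS, hSfin⟩ := Group.fg_iff.mp ‹_›
  have hH : closure (A ∪ (⁅H, ⊤⁆ : Subgroup G)) = H := by rw [closure_union, closure_eq, hAH]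
  refine (fg_iff _).mpr ⟨Set.image2 (⁅·, ·⁆) A S, le_antisymm ?_ ?_, hA.image2 _ hSfin⟩
  · rw [closure_le]
    rintro _ ⟨a, ha, s, -, rfl⟩
    exact commutator_mem_commutator (hAH ▸ mem_sup_left (subset_closure ha)) (mem_top s)
  · calc ⁅H, ⊤⁆ = ⁅closure (A ∪ (⁅H, ⊤⁆ : Subgroup G)), closure S⁆ := by rw [hH, hS]
      _ ≤ closure (Set.image2 (⁅·, ·⁆) (A ∪ (⁅H, ⊤⁆ : Subgroup G)) S) :=
        commutator_closure_le_closure_image2 fun x hx y =>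
          hc (commutator_mem_commutator (hH ▸ hx) (mem_top y))
      _ ≤ closure (Set.image2 (⁅·, ·⁆) A S) := by
        rw [closure_le]
        rintro _ ⟨x, hx | hx, s, hs, rfl⟩
        · exact subset_closure (Set.mem_image2_of_mem hx hs)
        · show ⁅x, s⁆ ∈ _
          rw [commutatorElement_eq_one_iff_commute.mpr (mem_center_iff.mp (hc hx) s).symm]
          exact one_mem _

theorem fg_of_lowerCentralSeries_eq_bot (n : ℕ) [Group.FG G]
    (h : lowerCentralSeries (⊤ : Subgroup G) n = ⊥) (H : Subgroup G) : H.FG := by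
  induction n generalizing G with
  | zero =>
    rw [le_bot_iff.mp (le_top.trans_eq h : H ≤ ⊥)]
    exact FG.bot
  | succ n ih =>
    set K := lowerCentralSeries (⊤ : Subgroup G) n
    have hKc : K ≤ center G := commutator_top_right_eq_bot_iff_le_center.mp h
    have hQ : lowerCentralSeries (⊤ : Subgroup (G ⧸ K)) n = ⊥ := by
      rw [← map_top_of_surjective _ (QuotientGroup.mk'_surjective K), ← map_lowerCentralSeries,
        map_eq_bot_iff, QuotientGroup.ker_mk']
    have hKfg : K.FG := by
      cases n with
      | zero => exact Group.fg_def.mp ‹_›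
      | succ m =>
        obtain ⟨A, hA, hAH⟩ := exists_finite_closure_sup_inf_ker_eq (QuotientGroup.mk' K)
          (ih hQ ((lowerCentralSeries ⊤ m).map (QuotientGroup.mk' K)))
        rw [QuotientGroup.ker_mk',
          inf_eq_right.mpr ((⊤ : Subgroup G).lowerCentralSeries_antitone m.le_succ)] at hAH
        exact fg_commutator_top_of_closure_sup_eq hKc hA hAH
    refine FG.of_map_of_inf_ker (QuotientGroup.mk' K) (ih hQ _) ?_
    rw [QuotientGroup.ker_mk']
    exact hKfg.of_le_of_le_center hKc inf_le_right

theorem fg_of_isNilpotent [Group.FG G] [Group.IsNilpotent G] (H : Subgroup G) : H.FG :=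
  let ⟨n, hn⟩ := nilpotent_iff_lowerCentralSeries.mp ‹_›
  fg_of_lowerCentralSeries_eq_bot n hn H

theorem normal_of_le_center {H : Subgroup G} (h : H ≤ center G) : H.Normal :=
  ⟨fun n hn g => by rwa [mem_center_iff.mp (h hn) g, mul_inv_cancel_right]⟩

end Subgroup

section Finite

variable {G : Type*} [Group G]

-- A lift of a central element of `G ⧸ Z(G)` is determined modulo `Z(G)` by its commutators with
-- a finite generating set, and these commutators lie in `Z(G)`.
theorem finite_center_quotient_center [Group.FG G] [Finite (center G)] :
    Finite (center (G ⧸ center G)) := by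
  obtain ⟨S, hS, hSfin⟩ := Group.fg_iff.mp ‹_›
  have : Finite S := hSfin
  have hmem : ∀ q ∈ center (G ⧸ center G), ∀ s : G, ⁅q.out, s⁆ ∈ center G := fun q hq s => by
    rw [← QuotientGroup.eq_one_iff, ← QuotientGroup.mk'_apply, map_commutatorElement,
      QuotientGroup.mk'_apply, QuotientGroup.out_eq', commutatorElement_eq_one_iff_commute]
    exact (mem_center_iff.mp hq _).symm
  refine Finite.of_injective
    (fun q : center (G ⧸ center G) => fun s : S => (⟨⁅q.1.out, s⁆, hmem q q.2 s⟩ : center G))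
    fun q q' hqq' => Subtype.ext ?_
  have hcomm : ∀ s ∈ S, Commute (q'.1.out⁻¹ * q.1.out) s := fun s hs =>
    commute_inv_mul_of_commutatorElement_eq (congrArg Subtype.val (congrFun hqq' ⟨s, hs⟩))
  have hZ : centralizer S = center G := by
    rw [← centralizer_closure, hS, coe_top, centralizer_univ]
  have hcenter : q'.1.out⁻¹ * q.1.out ∈ center G :=
    hZ.le fun s hs => (hcomm s hs).eq.symm
  rw [← QuotientGroup.out_eq' q.1, ← QuotientGroup.out_eq' q'.1]
  exact (QuotientGroup.eq.mpr hcenter).symm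

theorem finite_of_isNilpotent_of_finite_center [Group.FG G] [Group.IsNilpotent G]
    [Finite (center G)] : Finite G := by
  refine Group.nilpotent_center_quotient_ind
    (P := fun G _ _ => Group.FG G → Finite (center G) → Finite G) G
    (fun _ _ _ _ _ => inferInstance) (fun G _ _ ih _ _ => ?_) ‹_› ‹_›
  have := ih inferInstance finite_center_quotient_center
  exact (finite_iff_finite_and_finiteIndex (center G)).mpr
    ⟨inferInstance, finiteIndex_of_finite_quotient⟩

theorem isOfFinOrder_of_forall_mem_zpowers_zpow {g x : G} (hg : g ≠ 1)
    (h : ∀ n : ℤ, x ^ n ≠ 1 → g ∈ zpowers (x ^ n)) : IsOfFinOrder x := by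
  -- For `x` of infinite order, `g = x ^ m` cannot lie in `⟨x ^ (2 * m)⟩`.
  by_contra hx
  have hinj := injective_zpow_iff_not_isOfFinOrder.mpr hx
  have hne : ∀ n : ℤ, n ≠ 0 → x ^ n ≠ 1 := fun n hn h1 =>
    hn (hinj (h1.trans (zpow_zero x).symm))
  obtain ⟨m, hm⟩ := mem_zpowers_iff.mp (h 1 (hne 1 one_ne_zero))
  have hm0 : m ≠ 0 := by
    rintro rfl
    exact hg (by simpa using hm.symm)
  obtain ⟨k, hk⟩ := mem_zpowers_iff.mp (h (2 * m) (hne _ (by omega)))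
  have : 2 * m * k = m := by
    apply hinj
    show x ^ (2 * m * k) = x ^ m
    rw [zpow_mul x (2 * m) k, hk, ← hm, zpow_one]
  have : m * (2 * k - 1) = 0 := by linarith
  rcases mul_eq_zero.mp this with h0 | h0 <;> omega

theorem finite_of_forall_normal_ne_bot_mem [Group.FG G] [Group.IsNilpotent G] {g : G}
    (hg : g ≠ 1) (h : ∀ N : Subgroup G, N.Normal → N ≠ ⊥ → g ∈ N) : Finite G := by
  have htorsion : IsMulTorsion (center G) := fun x =>
    Submonoid.isOfFinOrder_coe.mp <| isOfFinOrder_of_forall_mem_zpowers_zpow hg fun n hn =>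
      h _ (normal_of_le_center (zpowers_le.mpr (zpow_mem x.2 n))) (zpowers_ne_bot.mpr hn)
  have : Group.FG (center G) := (Group.fg_iff_subgroup_fg _).mpr (fg_of_isNilpotent _)
  have : Finite (center G) := CommGroup.finite_of_fg_isMulTorsion _ htorsion
  exact finite_of_isNilpotent_of_finite_center

theorem exists_maximal_normal_notMem {g : G} (hg : g ≠ 1) :
    ∃ M : Subgroup G, Maximal (fun N : Subgroup G => N.Normal ∧ g ∉ N) M := by
  refine zorn_le₀ _ fun c hc hchain => ?_
  rcases c.eq_empty_or_nonempty with rfl | hne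
  · exact ⟨⊥, ⟨inferInstance, by simpa using hg⟩, by simp⟩
  have hdir := hchain.directedOn
  refine ⟨sSup c, ⟨⟨fun x hx y => ?_⟩, fun hg' => ?_⟩, fun _ => le_sSup⟩
  · obtain ⟨N, hN, hxN⟩ := (mem_sSup_of_directedOn hne hdir).mp hx
    exact (mem_sSup_of_directedOn hne hdir).mpr ⟨N, hN, (hc hN).1.conj_mem x hxN y⟩
  · obtain ⟨N, hN, hgN⟩ := (mem_sSup_of_directedOn hne hdir).mp hg'
    exact (hc hN).2 hgN

theorem QuotientGroup.mk_mem_of_maximal_normal_notMem {g : G} {M : Subgroup G} [M.Normal]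
    (hM : Maximal (fun N : Subgroup G => N.Normal ∧ g ∉ N) M) {N : Subgroup (G ⧸ M)}
    (hN : N.Normal) (hN' : N ≠ ⊥) : (g : G ⧸ M) ∈ N := by
  by_contra hgN
  have hMN : M = N.comap (QuotientGroup.mk' M) :=
    hM.eq_of_le ⟨hN.comap _, hgN⟩ fun m hm => by simp [(QuotientGroup.eq_one_iff m).mpr hm]
  apply hN'
  rw [← map_comap_eq_self_of_surjective (QuotientGroup.mk'_surjective M) N, ← hMN,
    Subgroup.map_eq_bot_iff, QuotientGroup.ker_mk']

theorem Group.residuallyFinite_of_isNilpotent [Group.FG G] [Group.IsNilpotent G] :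
    Group.ResiduallyFinite G := by
  refine residuallyFinite_iff_exists_finiteIndex.mpr fun g hg => ?_
  obtain ⟨M, hM⟩ := exists_maximal_normal_notMem hg
  have := hM.prop.1
  have : Finite (G ⧸ M) :=
    finite_of_forall_normal_ne_bot_mem (g := (g : G ⧸ M))
      (by rw [Ne, QuotientGroup.eq_one_iff]; exact hM.prop.2)
      fun _ hN hN' => QuotientGroup.mk_mem_of_maximal_normal_notMem hM hN hN'
  exact ⟨M, finiteIndex_of_finite_quotient, hM.prop.2⟩

end Finite

theorem residuallyFinite_of_group_residuallyFinite (G : Type*) [Group G]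
    [Group.ResiduallyFinite G] : ResiduallyFinite G := by
  intro g hg
  obtain ⟨H, hgH⟩ := Group.exists_finiteIndexNormalSubgroup_notMem g hg
  obtain ⟨F, _, _, ⟨e⟩⟩ := Finite.exists_type_univ_nonempty_mulEquiv (G ⧸ H.toSubgroup)
  refine ⟨F, _, inferInstance, e.toMonoidHom.comp (QuotientGroup.mk' _), ?_⟩
  simpa [QuotientGroup.eq_one_iff, FiniteIndexNormalSubgroup.mem_toSubgroup_iff] using hgH

theorem residuallyFinite_of_nilpotent_quotient_general (Γt Γ N : Type*) [Group Γt] [Group Γ]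
    [Group N] [Group.FG Γt] [Group.IsNilpotent N]
    (π : Γt →* Γ) (hΓ : ResiduallyFinite Γ)
    (ρ : Γt →* N) (hρ : Function.Surjective ρ)
    (hinj : ∀ z ∈ π.ker, ρ z = 1 → z = 1) :
    ResiduallyFinite Γt := by
  intro g hg
  by_cases hπg : π g = 1
  · have : Group.FG N := Group.fg_of_surjective hρ
    have : Group.ResiduallyFinite N := Group.residuallyFinite_of_isNilpotent
    obtain ⟨F, _, _, σ, hσ⟩ :=
      residuallyFinite_of_group_residuallyFinite N (ρ g) fun h => hg (hinj g hπg h)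
    exact ⟨F, _, ‹_›, σ.comp ρ, hσ⟩
  · obtain ⟨F, _, _, σ, hσ⟩ := hΓ (π g) hπg
    exact ⟨F, _, ‹_›, σ.comp π, hσ⟩

/-- If `Γ` is residually finite, `1 → Z → Γ̃ → Γ → 1` is an extension with `Γ̃`
finitely generated, and there is a nilpotent quotient `ρ : Γ̃ ↠ N` such that
`Z = ker π` injects into `N`, then `Γ̃` is residually finite. -/
theorem residuallyFinite_of_nilpotent_quotient (Γt Γ N : Type*) [Group Γt] [Group Γ]
    [Group N] [Group.FG Γt] [Group.IsNilpotent N]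
    (π : Γt →* Γ) (hπ : Function.Surjective π) (hΓ : ResiduallyFinite Γ)
    (ρ : Γt →* N) (hρ : Function.Surjective ρ)
    (hinj : ∀ z ∈ π.ker, ρ z = 1 → z = 1) :
    ResiduallyFinite Γt :=
  residuallyFinite_of_nilpotent_quotient_general Γt Γ N π hΓ ρ hρ hinj
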